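/- Let p, q, r, s, t be integers with gcd(q, r) = gcd(s, t) = 1. The cyclic sequence v_1 = (1,0), v_2 = (0,1), v_3 = (−1,p), v_4 = (q,r), v_5 = (s,t) forms complete fan data of length 5 that is LDP fan data with exactly three singular cones if and only if p ≤ 1, r ≤ min{−1, −pq−2, q−pq−1, −pq+qt−rs+ps+t−1}, t ≤ min{−2, −s−1, qt−rs+r−1}, and 2 ≤ qt−rs. -/

import Mathlib

/-- The determinant `det(u, w) = u₁w₂ − u₂w₁` of two integer vectors. -/
def detZ (u w : ℤ × ℤ) : ℤ := u.1 * w.2 - u.2 * w.1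

/-- The real vector associated to an integer vector. -/
noncomputable def toR2 (u : ℤ × ℤ) : ℝ × ℝ := ((u.1 : ℝ), (u.2 : ℝ))

/-- The cone `ℝ_{≥0} u + ℝ_{≥0} w` spanned by two integer vectors. -/
def coneOf (u w : ℤ × ℤ) : Set (ℝ × ℝ) :=
  {x | ∃ a b : ℝ, 0 ≤ a ∧ 0 ≤ b ∧ x = a • toR2 u + b • toR2 w}

/-- Complete fan data of length `d`: a cyclic sequence of primitive integer vectors with
`det(v_i, v_{i+1}) ≥ 1` whose successive cones cover `ℝ²` and have pairwise disjoint
interiors. -/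
def IsCompleteFanData (d : ℕ) (v : ZMod d → ℤ × ℤ) : Prop :=
  3 ≤ d ∧
  (∀ i, Int.gcd (v i).1 (v i).2 = 1) ∧
  (∀ i, 1 ≤ detZ (v i) (v (i + 1))) ∧
  (⋃ i, coneOf (v i) (v (i + 1))) = Set.univ ∧
  ∀ i j, i ≠ j →
    interior (coneOf (v i) (v (i + 1))) ∩ interior (coneOf (v j) (v (j + 1))) = ∅

/-- `f(i) = det(v_{i−1}, v_i) + det(v_i, v_{i+1}) + det(v_{i+1}, v_{i−1})`. -/
def fanF (d : ℕ) (v : ZMod d → ℤ × ℤ) (i : ZMod d) : ℤ :=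
  detZ (v (i - 1)) (v i) + detZ (v i) (v (i + 1)) + detZ (v (i + 1)) (v (i - 1))

/-- LDP fan data: complete fan data with `f(i) ≥ 1` for all `i`. -/
def IsLDPFanData (d : ℕ) (v : ZMod d → ℤ × ℤ) : Prop :=
  IsCompleteFanData d v ∧ ∀ i, 1 ≤ fanF d v i

/-- The number of singular cones, i.e. indices `i` with `det(v_i, v_{i+1}) ≥ 2`. -/
noncomputable def numSingular (d : ℕ) (v : ZMod d → ℤ × ℤ) : ℕ :=
  {i : ZMod d | 2 ≤ detZ (v i) (v (i + 1))}.ncard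

/-- Equivalence of fan data: some `GL(2, ℤ)` matrix maps the vector set of one
bijectively onto the vector set of the other. -/
def FanEquiv {d₁ d₂ : ℕ} (v : ZMod d₁ → ℤ × ℤ) (w : ZMod d₂ → ℤ × ℤ) : Prop :=
  ∃ M : Matrix (Fin 2) (Fin 2) ℤ, IsUnit M.det ∧
    (fun u : ℤ × ℤ => (M 0 0 * u.1 + M 0 1 * u.2, M 1 0 * u.1 + M 1 1 * u.2)) ''
      Set.range v = Set.range w

/-- The cyclic sequence of length `d − 1` obtained by deleting the vector `v_k`:
it lists `v_{k+1}, v_{k+2}, …, v_{k+d−1}`. -/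
def deleteAt {d : ℕ} (v : ZMod d → ℤ × ℤ) (k : ZMod d) : ZMod (d - 1) → ℤ × ℤ :=
  fun i => v (k + 1 + (i.val : ZMod d))

/-- The cyclic sequence of length `d + 1` obtained by inserting `v_k + v_{k+1}`
between `v_k` and `v_{k+1}`. -/
def insertAt {d : ℕ} (v : ZMod d → ℤ × ℤ) (k : ZMod d) : ZMod (d + 1) → ℤ × ℤ :=
  fun i =>
    if i.val ≤ k.val then v ((i.val : ℕ) : ZMod d)
    else if i.val = k.val + 1 then v k + v (k + 1)
    else v ((i.val - 1 : ℕ) : ZMod d)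

/-- The data `(1,0), (0,1), (−1,p), (q,r), (s,t)`. -/
def data5' (p q r s t : ℤ) : ZMod 5 → ℤ × ℤ := fun i =>
  if i = 0 then (1, 0) else if i = 1 then (0, 1) else if i = 2 then (-1, p)
  else if i = 3 then (q, r) else (s, t)

/-!
Since `det(v₀, v₁) = det(v₁, v₂) = 1`, three singular cones means that `det(v₂, v₃) = −r − pq`,
`det(v₃, v₄) = qt − rs` and `det(v₄, v₀) = −t` are at least 2, and the conditions `f(i) ≥ 1`
are linear in `r` and `t`. Two of them are strict because equality would give `q ∣ r` or
`s ∣ t`, contradicting primitivity. The condition `r ≤ −1` is where the geometry enters: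
`r = 0` again contradicts primitivity, while for `r ≥ 1` the lattice point `2v₃ − v₁` lies in
the interiors of both `σ₀` and `σ₂`.

Conversely, `x ∈ σᵢ` iff `det(vᵢ, x) ≥ 0 ≥ det(vᵢ₊₁, x)`, so the cones cover the plane as soon
as consecutive determinants are positive and no open half-plane contains all `vᵢ`; and two
cones have disjoint interiors when a line separates them, which here can always be taken
through `v₀`, `v₁` or `v₃`.
-/

lemma detZ_self (u : ℤ × ℤ) : detZ u u = 0 := by
  unfold detZ; ring

lemma detZ_swap (u w : ℤ × ℤ) : detZ w u = -detZ u w := by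
  unfold detZ; ring

lemma detZ_neg_left (n u : ℤ × ℤ) : detZ (-n) u = -detZ n u := by
  simp only [detZ, Prod.fst_neg, Prod.snd_neg]; ring

def detR (u x : ℝ × ℝ) : ℝ := u.1 * x.2 - u.2 * x.1

lemma detR_swap (u x : ℝ × ℝ) : detR x u = -detR u x := by
  unfold detR; ring

lemma detR_toR2_add_smul (n u w : ℤ × ℤ) (a b : ℝ) :
    detR (toR2 n) (a • toR2 u + b • toR2 w) = a * detZ n u + b * detZ n w := by
  simp only [detR, toR2, detZ, Prod.smul_mk, Prod.mk_add_mk, smul_eq_mul]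
  push_cast; ring

lemma mem_coneOf_iff {u w : ℤ × ℤ} (hD : 0 < detZ u w) (x : ℝ × ℝ) :
    x ∈ coneOf u w ↔ 0 ≤ detR (toR2 u) x ∧ 0 ≤ detR x (toR2 w) := by
  have hD' : (0 : ℝ) < detZ u w := by exact_mod_cast hD
  have hD0 : (detZ u w : ℝ) ≠ 0 := hD'.ne'
  constructor
  · rintro ⟨a, b, ha, hb, rfl⟩
    have hu : detR (toR2 u) (a • toR2 u + b • toR2 w) = b * detZ u w := by
      rw [detR_toR2_add_smul]; simp only [detZ]; push_cast; ring
    have hw : detR (a • toR2 u + b • toR2 w) (toR2 w) = a * detZ u w := by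
      rw [detR_swap, detR_toR2_add_smul]; simp only [detZ]; push_cast; ring
    rw [hu, hw]
    exact ⟨by positivity, by positivity⟩
  · rintro ⟨hu, hw⟩
    refine ⟨detR x (toR2 w) / detZ u w, detR (toR2 u) x / detZ u w, by positivity,
      by positivity, ?_⟩
    ext <;> simp only [detR, toR2, Prod.smul_mk, Prod.mk_add_mk, smul_eq_mul] <;> field_simp <;>
      simp only [detZ] <;> push_cast <;> ring

lemma coneOf_subset_detR_nonneg {n u w : ℤ × ℤ} (hu : 0 ≤ detZ n u) (hw : 0 ≤ detZ n w) :
    coneOf u w ⊆ {x | 0 ≤ detR (toR2 n) x} := by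
  rintro _ ⟨a, b, ha, hb, rfl⟩
  rw [Set.mem_ofPred_eq, detR_toR2_add_smul]
  have hu' : (0 : ℝ) ≤ detZ n u := by exact_mod_cast hu
  have hw' : (0 : ℝ) ≤ detZ n w := by exact_mod_cast hw
  positivity

lemma interior_eq_empty_of_subset_detR_eq_zero {n : ℤ × ℤ} (hn : n ≠ 0) {S : Set (ℝ × ℝ)}
    (hS : S ⊆ {x | detR (toR2 n) x = 0}) : interior S = ∅ := by
  let φ : ℝ × ℝ →ₗ[ℝ] ℝ :=
    (n.1 : ℝ) • LinearMap.snd ℝ ℝ ℝ - (n.2 : ℝ) • LinearMap.fst ℝ ℝ ℝ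
  have hker : {x | detR (toR2 n) x = 0} = (LinearMap.ker φ : Set (ℝ × ℝ)) := by
    ext x; simp [φ, detR, toR2]
  rw [hker] at hS
  by_contra hne
  have htop := (LinearMap.ker φ).eq_top_of_nonempty_interior'
    ((Set.nonempty_iff_ne_empty.2 hne).mono (interior_mono hS))
  have h₁ : ((1, 0) : ℝ × ℝ) ∈ LinearMap.ker φ := htop ▸ Submodule.mem_top
  have h₂ : ((0, 1) : ℝ × ℝ) ∈ LinearMap.ker φ := htop ▸ Submodule.mem_top
  simp [φ] at h₁ h₂
  exact hn (Prod.ext h₂ h₁)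

lemma toR2_mem_interior_coneOf {u w x : ℤ × ℤ} (hD : 0 < detZ u w) (hu : 0 < detZ u x)
    (hw : 0 < detZ x w) : toR2 x ∈ interior (coneOf u w) := by
  have hopen : IsOpen {y | 0 < detR (toR2 u) y ∧ 0 < detR y (toR2 w)} := by
    simp only [Set.ofPred_and, detR]
    exact (isOpen_lt continuous_const (by fun_prop)).inter
      (isOpen_lt continuous_const (by fun_prop))
  refine interior_maximal (fun y hy => (mem_coneOf_iff hD y).2 ⟨hy.1.le, hy.2.le⟩) hopen ?_
  simp only [Set.mem_ofPred_eq, detR, toR2, detZ] at hu hw ⊢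
  constructor <;> exact_mod_cast ‹_›

lemma ZMod.forall_of_imp_add_one {d : ℕ} [NeZero d] {P : ZMod d → Prop} {i₀ : ZMod d}
    (h₀ : P i₀) (h : ∀ i, P i → P (i + 1)) (j : ZMod d) : P j := by
  have hP : ∀ k : ℕ, P (i₀ + k) := by
    intro k
    induction k with
    | zero => simpa using h₀
    | succ k ih => simpa [add_assoc] using h _ ih
  simpa using hP (j - i₀).val

lemma iUnion_coneOf_eq_univ {d : ℕ} [NeZero d] {v : ZMod d → ℤ × ℤ}
    (hdet : ∀ i, 0 < detZ (v i) (v (i + 1)))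
    (hspan : ∀ x : ℝ × ℝ, ∃ i, detR (toR2 (v i)) x ≤ 0) :
    ⋃ i, coneOf (v i) (v (i + 1)) = Set.univ := by
  refine Set.eq_univ_of_forall fun x => Set.mem_iUnion.2 ?_
  by_contra! hx
  have hstep : ∀ i, 0 ≤ detR (toR2 (v i)) x → 0 < detR (toR2 (v (i + 1))) x := by
    intro i hi
    by_contra! hi'
    exact hx i ((mem_coneOf_iff (hdet i) x).2 ⟨hi, by rw [detR_swap]; linarith⟩)
  obtain ⟨i₀, hi₀⟩ := hspan (-x)
  obtain ⟨j, hj⟩ := hspan x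
  have hnonneg : ∀ i, 0 ≤ detR (toR2 (v i)) x :=
    ZMod.forall_of_imp_add_one (P := fun i => 0 ≤ detR (toR2 (v i)) x)
      (by simp only [detR, Prod.fst_neg, Prod.snd_neg] at hi₀ ⊢; linarith)
      (fun i hi => (hstep i hi).le)
  have hj' := hstep (j - 1) (hnonneg _)
  rw [sub_add_cancel] at hj'
  linarith

def ConesSeparated {d : ℕ} (v : ZMod d → ℤ × ℤ) (i j : ZMod d) : Prop :=
  ∃ n : ℤ × ℤ, n ≠ 0 ∧ detZ n (v i) ≤ 0 ∧ detZ n (v (i + 1)) ≤ 0 ∧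
    0 ≤ detZ n (v j) ∧ 0 ≤ detZ n (v (j + 1))

lemma ConesSeparated.symm {d : ℕ} {v : ZMod d → ℤ × ℤ} {i j : ZMod d}
    (h : ConesSeparated v i j) : ConesSeparated v j i := by
  obtain ⟨n, hn, h₁, h₂, h₃, h₄⟩ := h
  exact ⟨-n, neg_ne_zero.2 hn, by simp only [detZ_neg_left]; omega⟩

lemma conesSeparated_add_one {d : ℕ} {v : ZMod d → ℤ × ℤ}
    (hdet : ∀ i, 0 < detZ (v i) (v (i + 1))) (i : ZMod d) : ConesSeparated v i (i + 1) := by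
  refine ⟨v (i + 1), fun h => ?_, ?_⟩
  · simpa [h, detZ] using hdet i
  · rw [detZ_swap, detZ_self]
    exact ⟨by linarith [hdet i], le_rfl, le_rfl, (hdet (i + 1)).le⟩

lemma ConesSeparated.interior_inter_eq_empty {d : ℕ} {v : ZMod d → ℤ × ℤ} {i j : ZMod d}
    (h : ConesSeparated v i j) :
    interior (coneOf (v i) (v (i + 1))) ∩ interior (coneOf (v j) (v (j + 1))) = ∅ := by
  obtain ⟨n, hn, h₁, h₂, h₃, h₄⟩ := h
  rw [← interior_inter]
  refine interior_eq_empty_of_subset_detR_eq_zero hn fun x ⟨hx, hx'⟩ => le_antisymm ?_ ?_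
  · have := coneOf_subset_detR_nonneg (n := -n) (by rw [detZ_neg_left]; omega)
      (by rw [detZ_neg_left]; omega) hx
    simp only [Set.mem_ofPred_eq, detR, toR2, Prod.fst_neg, Prod.snd_neg, Int.cast_neg] at this ⊢
    linarith
  · exact coneOf_subset_detR_nonneg h₃ h₄ hx'

lemma isCompleteFanData_of_conesSeparated {d : ℕ} (hd : 3 ≤ d) {v : ZMod d → ℤ × ℤ}
    (hprim : ∀ i, Int.gcd (v i).1 (v i).2 = 1) (hdet : ∀ i, 1 ≤ detZ (v i) (v (i + 1)))
    (hspan : ∀ x : ℝ × ℝ, ∃ i, detR (toR2 (v i)) x ≤ 0)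
    (hsep : ∀ i j, i ≠ j → ConesSeparated v i j) : IsCompleteFanData d v := by
  have : NeZero d := ⟨by omega⟩
  exact ⟨hd, hprim, hdet, iUnion_coneOf_eq_univ hdet hspan,
    fun i j hij => (hsep i j hij).interior_inter_eq_empty⟩

lemma ZMod.five_cases (i : ZMod 5) : i = 0 ∨ i = 1 ∨ i = 2 ∨ i = 3 ∨ i = 4 := by
  decide +revert

lemma ZMod.forall_five_iff {P : ZMod 5 → Prop} : (∀ i, P i) ↔ P 0 ∧ P 1 ∧ P 2 ∧ P 3 ∧ P 4 :=
  ⟨fun h => ⟨h 0, h 1, h 2, h 3, h 4⟩, fun ⟨h₀, h₁, h₂, h₃, h₄⟩ i => by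
    rcases ZMod.five_cases i with rfl | rfl | rfl | rfl | rfl <;> assumption⟩

lemma ZMod.forall_ne_of_add_one_of_add_two {P : ZMod 5 → ZMod 5 → Prop}
    (hsymm : ∀ i j, P i j → P j i) (h₁ : ∀ i, P i (i + 1)) (h₂ : ∀ i, P i (i + 2)) :
    ∀ i j, i ≠ j → P i j := by
  intro i j hij
  obtain ⟨k, rfl⟩ : ∃ k, j = i + k := ⟨j - i, by ring⟩
  rcases ZMod.five_cases k with rfl | rfl | rfl | rfl | rfl
  · simp at hij
  · exact h₁ i
  · exact h₂ i
  · simpa [add_assoc, show (3 : ZMod 5) + 2 = 0 from rfl] using hsymm _ _ (h₂ (i + 3))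
  · simpa [add_assoc, show (4 : ZMod 5) + 1 = 0 from rfl] using hsymm _ _ (h₁ (i + 4))

lemma Int.eq_one_or_neg_one_of_gcd_eq_one_of_dvd {a b : ℤ} (h : Int.gcd a b = 1) (hab : a ∣ b) :
    a = 1 ∨ a = -1 := by
  rw [Int.gcd_eq_natAbs_left hab] at h
  simpa using Int.natAbs_eq_iff.1 h

section Pentagon

variable {p q r s t : ℤ}

lemma data5'_fanF_iff : (∀ i, 1 ≤ fanF 5 (data5' p q r s t) i) ↔
    t ≤ -s ∧ p ≤ 1 ∧ r ≤ q - p * q ∧ r ≤ -p * q + q * t - r * s + p * s + t - 1 ∧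
      t ≤ q * t - r * s + r - 1 := by
  rw [ZMod.forall_five_iff]
  simp +decide [fanF, data5', detZ]
  constructor <;> rintro ⟨h₀, h₁, h₂, h₃, h₄⟩ <;> refine ⟨?_, ?_, ?_, ?_, ?_⟩ <;> linarith

lemma numSingular_data5'_eq_three_iff :
    numSingular 5 (data5' p q r s t) = 3 ↔ 2 ≤ -r - p * q ∧ 2 ≤ q * t - r * s ∧ 2 ≤ -t := by
  set S := {i : ZMod 5 | 2 ≤ detZ (data5' p q r s t i) (data5' p q r s t (i + 1))}
  have hsub : S ⊆ {2, 3, 4} := by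
    intro i hi
    rcases ZMod.five_cases i with rfl | rfl | rfl | rfl | rfl <;>
      simp +decide [S, data5', detZ] at hi ⊢
  have hcard : ({2, 3, 4} : Set (ZMod 5)).ncard = 3 :=
    Set.ncard_eq_three.2 ⟨2, 3, 4, by decide, by decide, by decide, rfl⟩
  have hS : S.ncard = 3 ↔ {2, 3, 4} ⊆ S :=
    ⟨fun h => (Set.eq_of_subset_of_ncard_le hsub (by rw [hcard, h])).ge,
      fun h => (hsub.antisymm h).symm ▸ hcard⟩
  change S.ncard = 3 ↔ _
  rw [hS, Set.insert_subset_iff, Set.insert_subset_iff, Set.singleton_subset_iff]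
  simp +decide [S, data5', detZ]

lemma data5'_exists_detR_nonpos (hp : p ≤ 1) (ht : t ≤ -1) (hts : t ≤ -s - 1) (x : ℝ × ℝ) :
    ∃ i, detR (toR2 (data5' p q r s t i)) x ≤ 0 := by
  by_contra! h
  obtain ⟨h₀, h₁, h₂, -, h₄⟩ := ZMod.forall_five_iff.1 h
  simp +decide [detR, toR2, data5'] at h₀ h₁ h₂ h₄
  have hp' : (p : ℝ) ≤ 1 := by exact_mod_cast hp
  have ht' : (t : ℝ) ≤ -1 := by exact_mod_cast ht
  have hts' : (t : ℝ) ≤ -s - 1 := by exact_mod_cast hts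
  -- the positive relations `-s v₀ - t v₁ + v₄ = 0` and `(-t - ps) v₁ + s v₂ + v₄ = 0`
  rcases le_or_gt (s : ℝ) 0 with hs | hs
  · nlinarith [mul_nonneg (neg_nonneg.2 hs) h₀.le,
      mul_pos (by linarith : (0 : ℝ) < -t) (neg_pos.2 h₁)]
  · nlinarith [mul_pos (by nlinarith : (0 : ℝ) < -t - p * s) (neg_pos.2 h₁),
      mul_pos hs (by linarith : (0 : ℝ) < -x.2 - p * x.1)]

lemma data5'_conesSeparated_add_two (hr : r ≤ -1) (hd₂ : 0 ≤ -r - p * q)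
    (hd₃ : 1 ≤ q * t - r * s) (ht : t ≤ -1) (i : ZMod 5) :
    ConesSeparated (data5' p q r s t) i (i + 2) := by
  have hs : 0 < q → 0 < s := fun hq => by nlinarith
  have hv₃ : -((q, r) : ℤ × ℤ) ≠ 0 := by simp [Prod.ext_iff]; omega
  rcases ZMod.five_cases i with rfl | rfl | rfl | rfl | rfl
  · rcases le_total q 0 with hq | hq
    · exact ⟨(0, 1), by decide, by simp +decide [data5', detZ]; omega⟩
    · exact ⟨-(q, r), hv₃, by simp +decide [data5', detZ]; and_intros <;> linarith⟩
  · rcases le_or_gt q 0 with hq | hq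
    · exact ⟨(q, r), neg_ne_zero.1 hv₃, by simp +decide [data5', detZ]; and_intros <;> linarith⟩
    · exact ⟨(0, -1), by decide, by simp +decide [data5', detZ]; and_intros <;> linarith [hs hq]⟩
  · exact ⟨(q, r), neg_ne_zero.1 hv₃, by simp +decide [data5', detZ]; and_intros <;> linarith⟩
  · exact ⟨(1, 0), by decide, by simp +decide [data5', detZ]; omega⟩
  · rcases le_or_gt q 0 with hq | hq
    · exact ⟨-(q, r), hv₃, by simp +decide [data5', detZ]; and_intros <;> linarith⟩
    · exact ⟨(0, 1), by decide, by simp +decide [data5', detZ]; linarith [hs hq]⟩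

lemma data5'_isCompleteFanData (hqr : Int.gcd q r = 1) (hst : Int.gcd s t = 1) (hp : p ≤ 1)
    (hr : r ≤ -1) (hd₂ : 1 ≤ -r - p * q) (hd₃ : 1 ≤ q * t - r * s) (ht : t ≤ -1)
    (hts : t ≤ -s - 1) : IsCompleteFanData 5 (data5' p q r s t) := by
  have hdet : ∀ i, 1 ≤ detZ (data5' p q r s t i) (data5' p q r s t (i + 1)) := by
    rw [ZMod.forall_five_iff]
    simp +decide [data5', detZ]
    and_intros <;> linarith
  refine isCompleteFanData_of_conesSeparated (by norm_num) ?_ hdet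
    (data5'_exists_detR_nonpos hp ht hts) ?_
  · rw [ZMod.forall_five_iff]
    simp +decide [data5', hqr, hst]
  · exact ZMod.forall_ne_of_add_one_of_add_two (fun _ _ h => h.symm)
      (conesSeparated_add_one hdet) (data5'_conesSeparated_add_two hr (by linarith) hd₃ ht)

lemma r_ne_zero_of_gcd_eq_one (hqr : Int.gcd q r = 1) (hp : p ≤ 1) (hd₂ : 2 ≤ -r - p * q)
    (hd₃ : 2 ≤ q * t - r * s) (ht : t ≤ -2) : r ≠ 0 := by
  rintro rfl
  rcases Int.eq_one_or_neg_one_of_gcd_eq_one_of_dvd hqr (dvd_zero q) with rfl | rfl <;> linarith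

lemma r_ne_sub_mul_of_gcd_eq_one (hqr : Int.gcd q r = 1) (hd₂ : 2 ≤ -r - p * q) :
    r ≠ q - p * q := by
  rintro rfl
  rcases Int.eq_one_or_neg_one_of_gcd_eq_one_of_dvd hqr ⟨1 - p, by ring⟩ with rfl | rfl <;>
    linarith

lemma t_ne_neg_of_gcd_eq_one (hst : Int.gcd s t = 1) (ht : t ≤ -2) : t ≠ -s := by
  rintro rfl
  rcases Int.eq_one_or_neg_one_of_gcd_eq_one_of_dvd hst ⟨-1, by ring⟩ with rfl | rfl <;> omega

lemma r_nonpos_of_interior_inter_eq_empty (hp : p ≤ 1) (hf₂ : r ≤ q - p * q)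
    (hd₂ : 1 ≤ -r - p * q)
    (hdisj : interior (coneOf (1, 0) (0, 1)) ∩ interior (coneOf (-1, p) (q, r)) = ∅) :
    r ≤ 0 := by
  by_contra! hr
  have hq : 0 < q := by nlinarith
  -- otherwise `2 v₃ - v₁` lies in the interiors of both `σ₀` and `σ₂`
  have h₀ := toR2_mem_interior_coneOf (u := (1, 0)) (w := (0, 1)) (x := (2 * q, 2 * r - 1))
    (by decide) (by simp only [detZ]; omega) (by simp only [detZ]; omega)
  have h₂ := toR2_mem_interior_coneOf (u := (-1, p)) (w := (q, r)) (x := (2 * q, 2 * r - 1))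
    (by simp only [detZ]; linarith) (by simp only [detZ]; linarith) (by simp only [detZ]; linarith)
  exact Set.eq_empty_iff_forall_notMem.1 hdisj _ ⟨h₀, h₂⟩

end Pentagon

/-- Characterization of the pentagonal LDP fan data with exactly three singular cones. -/
theorem pentagon_three_singular (p q r s t : ℤ)
    (hqr : Int.gcd q r = 1) (hst : Int.gcd s t = 1) :
    (IsLDPFanData 5 (data5' p q r s t) ∧ numSingular 5 (data5' p q r s t) = 3) ↔
      (p ≤ 1 ∧
       r ≤ min (min (-1) (-p * q - 2))
             (min (q - p * q - 1) (-p * q + q * t - r * s + p * s + t - 1)) ∧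
       t ≤ min (min (-2) (-s - 1)) (q * t - r * s + r - 1) ∧
       2 ≤ q * t - r * s) := by
  simp only [IsLDPFanData, data5'_fanF_iff, numSingular_data5'_eq_three_iff, le_min_iff]
  constructor
  · rintro ⟨⟨hfan, hf₀, hp, hf₂, hf₃, hf₄⟩, hd₂, hd₃, hd₄⟩
    have hr₀ := r_ne_zero_of_gcd_eq_one hqr hp hd₂ hd₃ (by linarith)
    have hr := r_nonpos_of_interior_inter_eq_empty hp hf₂ (by linarith)
      (hfan.2.2.2.2 0 2 (by decide))
    have hf₂' := r_ne_sub_mul_of_gcd_eq_one hqr hd₂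
    have hf₀' := t_ne_neg_of_gcd_eq_one hst (by linarith)
    exact ⟨hp, ⟨⟨by omega, by linarith⟩, by omega, hf₃⟩, ⟨⟨by linarith, by omega⟩, hf₄⟩, hd₃⟩
  · rintro ⟨hp, ⟨⟨hr, hd₂⟩, hf₂, hf₃⟩, ⟨⟨ht, hts⟩, hf₄⟩, hd₃⟩
    exact ⟨⟨data5'_isCompleteFanData hqr hst hp hr (by linarith) (by linarith) (by linarith) hts,
      by omega, hp, by omega, hf₃, hf₄⟩, by linarith, hd₃, by linarith⟩
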